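/- Let V be a commutative unital quantale, F : Type u ⥤ Type u a functor, and L a lifting of F to V-Cat. There exists a V-enriched lax extension E of F to V-Rel (i.e. a lax extension additionally satisfying u ≤ E (u ⊗ 1_X) 𝔵 𝔵 for all u ∈ V, all X : Type u and all 𝔵 ∈ F.obj X, where (u ⊗ 1_X) x y = if x = y then u else ⊥) such that E a = L a for every V-category (X,a), if and only if L preserves initial morphisms and L is V-Cat-enriched, i.e. for all V-functors f, g : (X,a) → (Y,b), ⨅_x b (f x) (g x) ≤ L b (F.map f 𝔵) (F.map g 𝔵) for all 𝔵 ∈ F.obj X. -/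

import Mathlib

universe u v w

open CategoryTheory

/-- `V` is a (commutative unital) quantale: the tensor distributes over suprema. -/
def QuantaleLaw (V : Type u) [CompleteLattice V] [CommMonoid V] : Prop :=
  ∀ (u : V) (s : Set V), u * sSup s = ⨆ v ∈ s, u * v

/-- Internal hom of the quantale: `hom u w = ⨆ {v | u ⊗ v ≤ w}`. -/
def qhom {V : Type u} [CompleteLattice V] [CommMonoid V] (u w : V) : V :=
  sSup {v | u * v ≤ w}

/-- `a` is a `V`-category structure on `X`. -/
def IsVCat {V : Type u} [CompleteLattice V] [CommMonoid V] {X : Type v}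
    (a : X → X → V) : Prop :=
  (∀ x, (1 : V) ≤ a x x) ∧ ∀ x y z, a x y * a y z ≤ a x z

/-- `f` is a `V`-functor from `(X,a)` to `(Y,b)`. -/
def IsVFunctor {V : Type u} [CompleteLattice V] {X : Type v} {Y : Type w}
    (a : X → X → V) (b : Y → Y → V) (f : X → Y) : Prop :=
  ∀ x y, a x y ≤ b (f x) (f y)

/-- `f` is an initial `V`-functor from `(X,a)` to `(Y,b)`. -/
def IsInitialVFunctor {V : Type u} {X : Type v} {Y : Type w}
    (a : X → X → V) (b : Y → Y → V) (f : X → Y) : Prop :=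
  ∀ x y, a x y = b (f x) (f y)

/-- The `V`-category structure of the power `V^κ`. -/
def powStr {V : Type u} [CompleteLattice V] [CommMonoid V] (κ : Type v)
    (p q : κ → V) : V :=
  ⨅ i, qhom (p i) (q i)

/-- The graph of a function, as a `V`-relation: `k` on the graph, `⊥` elsewhere. -/
def fnGraph {V : Type u} [CompleteLattice V] [CommMonoid V] {X : Type v} {Y : Type w}
    (f : X → Y) : X → Y → V :=
  fun x y => ⨆ _ : f x = y, (1 : V)

/-- A lifting of a `Set`-functor `F` to `V`-Cat. -/
structure Lifting (V : Type u) [CompleteLattice V] [CommMonoid V]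
    (F : Type u ⥤ Type u) where
  str : ∀ {X : Type u}, (X → X → V) → F.obj X → F.obj X → V
  isVCat : ∀ {X : Type u} (a : X → X → V), IsVCat a → IsVCat (str a)
  map : ∀ {X Y : Type u} (a : X → X → V) (b : Y → Y → V) (f : X → Y),
    IsVCat a → IsVCat b → IsVFunctor a b f →
    IsVFunctor (str a) (str b) (F.map (TypeCat.ofHom f))

/-- A `κ`-ary `V`-valued predicate lifting for a `Set`-functor `F`. -/
structure PredLifting (V : Type u) [CompleteLattice V] [CommMonoid V]
    (F : Type u ⥤ Type u) (κ : Type u) where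
  app : ∀ {X : Type u}, (X → κ → V) → F.obj X → V
  natural : ∀ {X Y : Type u} (f : X → Y) (p : Y → κ → V) (t : F.obj X),
    app (fun x => p (f x)) t = app p (F.map (TypeCat.ofHom f) t)

/-- A predicate lifting is monotone if it preserves the pointwise order of predicates. -/
def PredLifting.Mono {V : Type u} [CompleteLattice V] [CommMonoid V]
    {F : Type u ⥤ Type u} {κ : Type u} (lam : PredLifting V F κ) : Prop :=
  ∀ (X : Type u) (p q : X → κ → V), (∀ x i, p x i ≤ q x i) →
    ∀ t, lam.app p t ≤ lam.app q t

/-- A predicate lifting is compatible with a lifting `L` if it lifts `V`-functorial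
predicates to `V`-functorial predicates. -/
def Compatible {V : Type u} [CompleteLattice V] [CommMonoid V] {F : Type u ⥤ Type u}
    (L : Lifting V F) {κ : Type u} (lam : PredLifting V F κ) : Prop :=
  ∀ (X : Type u) (a : X → X → V), IsVCat a → ∀ f : X → κ → V,
    IsVFunctor a (powStr κ) f → IsVFunctor (L.str a) qhom (lam.app f)

/-- The Kantorovich `V`-category structure on `F.obj X` induced by a family of
predicate liftings. -/
noncomputable def kantStr {V : Type u} [CompleteLattice V] [CommMonoid V]
    {F : Type u ⥤ Type u} {ι : Type v} {κ : ι → Type u}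
    (Λ : ∀ l, PredLifting V F (κ l)) {X : Type u} (a : X → X → V)
    (t s : F.obj X) : V :=
  ⨅ l, ⨅ f : {f : X → κ l → V // IsVFunctor a (powStr (κ l)) f},
    qhom ((Λ l).app f.1 t) ((Λ l).app f.1 s)

/-- A generalized predicate lifting for `(F, L)` with parameter `V`-category `(A, α)`. -/
structure GenPredLifting (V : Type u) [CompleteLattice V] [CommMonoid V]
    (F : Type u ⥤ Type u) (L : Lifting V F) (A : Type u) (α : A → A → V) where
  app : ∀ {Z : Type u}, (Z → Z → V) → (Z → A) → F.obj Z → V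
  isVFunctor : ∀ {Z : Type u} (c : Z → Z → V), IsVCat c → ∀ f : Z → A,
    IsVFunctor c α f → IsVFunctor (L.str c) qhom (app c f)
  natural : ∀ {Z Z' : Type u} (c : Z → Z → V) (c' : Z' → Z' → V),
    IsVCat c → IsVCat c' → ∀ (u : Z → Z'), IsVFunctor c c' u →
    ∀ (g : Z' → A), IsVFunctor c' α g →
    ∀ t : F.obj Z, app c (fun z => g (u z)) t = app c' g (F.map (TypeCat.ofHom u) t)

/-- A lax extension of a `Set`-functor `F` to `V`-Rel. -/
structure LaxExt (V : Type u) [CompleteLattice V] [CommMonoid V]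
    (F : Type u ⥤ Type u) where
  ext : ∀ {X Y : Type u}, (X → Y → V) → F.obj X → F.obj Y → V
  mono : ∀ {X Y : Type u} (r r' : X → Y → V), (∀ x y, r x y ≤ r' x y) →
    ∀ t s, ext r t s ≤ ext r' t s
  comp : ∀ {X Y Z : Type u} (r : X → Y → V) (s : Y → Z → V)
    (t : F.obj X) (w : F.obj Z),
    (⨆ u : F.obj Y, ext r t u * ext s u w) ≤
      ext (fun x z => ⨆ y, r x y * s y z) t w
  lax_map : ∀ {X Y : Type u} (f : X → Y) (t : F.obj X),
    (1 : V) ≤ ext (fnGraph f) t (F.map (TypeCat.ofHom f) t)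
  lax_map_op : ∀ {X Y : Type u} (f : X → Y) (t : F.obj X),
    (1 : V) ≤ ext (fun y x => fnGraph f x y) (F.map (TypeCat.ofHom f) t) t


/-!
For a lax extension `E`, composing with the graph of a function and with the converse of that
graph are both neutral, so `E r (F f t) (F g s) = E (fun x z => r (f x) (g z)) t s`. With
`E a = L a` on `V`-categories this gives preservation of initial maps at once, and enrichment
from `u ≤ E (u ⊗ 1_X)` with `u = ⨅ x, b (f x) (g x)`, since `u ⊗ 1_X ≤ b (f x) (g z)`.

Conversely, a `V`-relation `r : X ⇸ Y` is a `V`-functor `x ↦ r x` into the collage of the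
evaluation relation `V^Y ⇸ Y`, and `E r t s` is `L` of the collage between `F (inl ∘ r) t` and
`F inr s`. Enrichment of `L`, applied to maps out of discrete `V`-categories, gives monotonicity,
the laxness conditions on graphs and `u ≤ E (u ⊗ 1_X)`; functoriality of `L` along
`p ↦ s · p` gives laxness for composition. For a `V`-category `a`, the Yoneda embedding
`x ↦ a x` gives `L a ≤ E a`; the restriction of the collage along `X ⊕ X → V^X ⊕ X` lies
below `a` on the codiagonal, so preservation of initial maps gives `E a ≤ L a`.
-/

open TypeCat

theorem le_mul_mul_of_one_le {M : Type*} [Monoid M] [Preorder M] [MulLeftMono M] [MulRightMono M]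
    {x y : M} (hx : 1 ≤ x) (hy : 1 ≤ y) (a : M) : a ≤ x * a * y :=
  (le_mul_of_one_le_right' hy).trans (mul_le_mul_left (le_mul_of_one_le_left' hx) y)

theorem map_ofHom_comp_apply (F : Type u ⥤ Type u) {X Y Z : Type u} (f : X → Y) (g : Y → Z)
    (t : F.obj X) : F.map (↾g) (F.map (↾f) t) = F.map (↾fun x => g (f x)) t :=
  (Functor.map_comp_apply F (↾f) (↾g) t).symm

theorem map_ofHom_id_apply (F : Type u ⥤ Type u) {X : Type u} (t : F.obj X) :
    F.map (↾fun x : X => x) t = t :=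
  Functor.map_id_apply F X t

section Quantale

variable {V : Type u} [CompleteLattice V] [CommMonoid V]

theorem QuantaleLaw.isQuantale (hV : QuantaleLaw V) : IsQuantale V where
  mul_sSup_distrib := hV
  sSup_mul_distrib s y := by simpa only [mul_comm _ y] using hV y s

theorem isVFunctor_fnGraph_id {X : Type v} {Y : Type w} {b : Y → Y → V} (hb : IsVCat b)
    (f : X → Y) : IsVFunctor (fnGraph id) b f :=
  fun x _ => iSup_le fun h => h ▸ hb.1 (f x)

variable [IsQuantale V]

theorem le_qhom_iff {u v w : V} : v ≤ qhom u w ↔ u * v ≤ w :=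
  Quantale.rightMulResiduation_le_iff_mul_le

theorem mul_qhom_le (u w : V) : u * qhom u w ≤ w := le_qhom_iff.1 le_rfl

theorem qhom_le_of_one_le {u : V} (hu : 1 ≤ u) (w : V) : qhom u w ≤ w :=
  (le_mul_of_one_le_left' hu).trans (mul_qhom_le u w)

theorem one_le_powStr {κ : Type v} {p q : κ → V} (h : ∀ i, p i ≤ q i) :
    1 ≤ powStr κ p q :=
  le_iInf fun i => le_qhom_iff.2 (by rw [mul_one]; exact h i)

theorem mul_powStr_le {κ : Type v} (p q : κ → V) (i : κ) : p i * powStr κ p q ≤ q i :=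
  (mul_le_mul_right (iInf_le _ i) _).trans (mul_qhom_le _ _)

theorem isVCat_powStr (κ : Type v) : IsVCat (powStr (V := V) κ) :=
  ⟨fun _ => one_le_powStr fun _ => le_rfl, fun p q r => le_iInf fun i => le_qhom_iff.2 <|
    calc p i * (powStr κ p q * powStr κ q r) = p i * powStr κ p q * powStr κ q r :=
          (mul_assoc _ _ _).symm
      _ ≤ q i * powStr κ q r := mul_le_mul_left (mul_powStr_le p q i) _
      _ ≤ r i := mul_powStr_le q r i⟩

theorem powStr_le_powStr_comp {Y : Type v} {Z : Type w} (s : Y → Z → V) (p q : Y → V) :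
    powStr Y p q ≤ powStr Z (fun z => ⨆ y, p y * s y z) (fun z => ⨆ y, q y * s y z) := by
  refine le_iInf fun z => le_qhom_iff.2 ?_
  rw [Quantale.iSup_mul_distrib]
  refine iSup_le fun y => ?_
  calc p y * s y z * powStr Y p q = p y * powStr Y p q * s y z := mul_right_comm _ _ _
    _ ≤ q y * s y z := mul_le_mul_left (mul_powStr_le p q y) _
    _ ≤ ⨆ y, q y * s y z := le_iSup (fun y => q y * s y z) y

/-- Yoneda: `x ↦ a x` is a `V`-functor from `(X, a)` to the dual of `V^X`. -/
theorem le_powStr_of_isVCat {X : Type v} {a : X → X → V} (ha : IsVCat a) (x x' : X) :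
    a x x' ≤ powStr X (a x') (a x) :=
  le_iInf fun y => le_qhom_iff.2 (by rw [mul_comm]; exact ha.2 x x' y)

theorem fnGraph_mul {X : Type v} {Y : Type w} (f : X → Y) (x : X) (y : Y) (u : V) :
    fnGraph f x y * u = ⨆ _ : f x = y, u := by
  by_cases h : f x = y <;> simp [fnGraph, h]

theorem mul_fnGraph {X : Type v} {Y : Type w} (f : X → Y) (x : X) (y : Y) (u : V) :
    u * fnGraph f x y = ⨆ _ : f x = y, u := by
  rw [mul_comm, fnGraph_mul]

theorem iSup_fnGraph_mul {X : Type v} {Y Z : Type w} (f : X → Y) (r : Y → Z → V) (x : X)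
    (z : Z) : ⨆ y, fnGraph f x y * r y z = r (f x) z := by
  simp only [fnGraph_mul, iSup_iSup_eq_right]

theorem iSup_mul_fnGraph {X : Type v} {Y Z : Type w} (r : X → Y → V) (g : Z → Y) (x : X)
    (z : Z) : ⨆ y, r x y * fnGraph g z y = r x (g z) := by
  simp only [mul_fnGraph, iSup_iSup_eq_right]

theorem iSup_fnGraph_mul_le {X : Type v} {Y Z : Type w} (f : X → Y) (r : Y → Z → V) (y : Y)
    (z : Z) : ⨆ x, fnGraph f x y * r (f x) z ≤ r y z := by
  simp only [fnGraph_mul]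
  exact iSup₂_le fun x h => h ▸ le_rfl

theorem iSup_mul_fnGraph_le {X : Type v} {Y Z : Type w} (r : X → Y → V) (g : Z → Y) (x : X)
    (y : Y) : ⨆ z, r x (g z) * fnGraph g z y ≤ r x y := by
  simp only [mul_fnGraph]
  exact iSup₂_le fun z h => h ▸ le_rfl

theorem isVCat_fnGraph_id (X : Type v) : IsVCat (fnGraph (V := V) (id : X → X)) :=
  ⟨fun x => le_iSup_of_le rfl le_rfl, fun x y z => by
    rw [fnGraph_mul]; exact iSup_le fun h => h ▸ le_rfl⟩

end Quantale

/-- The collage of the evaluation `V`-relation `(p, y) ↦ p y` from `V^Y`, with the dual of its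
power structure, to the discrete `Y`. -/
def collage (V : Type u) [CompleteLattice V] [CommMonoid V] (Y : Type v) :
    (Y → V) ⊕ Y → (Y → V) ⊕ Y → V
  | .inl p, .inl q => powStr Y q p
  | .inl p, .inr y => p y
  | .inr _, .inl _ => ⊥
  | .inr y, .inr y' => fnGraph id y y'

theorem isVCat_collage {V : Type u} [CompleteLattice V] [CommMonoid V] [IsQuantale V]
    (Y : Type v) : IsVCat (collage V Y) := by
  constructor
  · rintro (p | y)
    · exact one_le_powStr fun _ => le_rfl
    · exact (isVCat_fnGraph_id Y).1 y
  · rintro (p | y) (q | y') (w | y'')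
    · exact (mul_comm _ _).trans_le ((isVCat_powStr Y).2 w q p)
    · exact (mul_comm _ _).trans_le (mul_powStr_le q p y'')
    · exact Quantale.mul_bot.trans_le bot_le
    · exact (mul_fnGraph _ _ _ _).trans_le (iSup_le fun h => h ▸ le_rfl)
    · exact Quantale.bot_mul.trans_le bot_le
    · exact Quantale.bot_mul.trans_le bot_le
    · exact Quantale.mul_bot.trans_le bot_le
    · exact (isVCat_fnGraph_id Y).2 y y' y''

namespace Lifting

variable {V : Type u} [CompleteLattice V] [CommMonoid V] {F : Type u ⥤ Type u} (L : Lifting V F)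

def PreservesInitial : Prop :=
  ∀ {X Y : Type u} (a : X → X → V) (b : Y → Y → V) (f : X → Y),
    IsVCat a → IsVCat b → IsInitialVFunctor a b f →
    IsInitialVFunctor (L.str a) (L.str b) (F.map (TypeCat.ofHom f))

def IsEnriched : Prop :=
  ∀ (X Y : Type u) (a : X → X → V) (b : Y → Y → V), IsVCat a → IsVCat b →
    ∀ f g : X → Y, IsVFunctor a b f → IsVFunctor a b g →
    ∀ t : F.obj X, (⨅ x, b (f x) (g x)) ≤
      L.str b (F.map (TypeCat.ofHom f) t) (F.map (TypeCat.ofHom g) t)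

variable {L}

theorem PreservesInitial.str_map_le (hL : L.PreservesInitial) {X Y Z : Type u}
    {a : X → X → V} {b : Y → Y → V} (ha : IsVCat a) (hb : IsVCat b)
    (f : Z → X) (g : Z → Y)
    (hle : ∀ z z', a (f z) (f z') ≤ b (g z) (g z')) (t s : F.obj Z) :
    L.str a (F.map (↾f) t) (F.map (↾f) s) ≤ L.str b (F.map (↾g) t) (F.map (↾g) s) := by
  have hc : IsVCat fun z z' => a (f z) (f z') := ⟨fun _ => ha.1 _, fun _ _ _ => ha.2 _ _ _⟩
  rw [← hL _ a f hc ha fun _ _ => rfl]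
  exact L.map _ b g hc hb hle t s

theorem IsEnriched.iInf_le_str_map [IsQuantale V] (hL : L.IsEnriched) {X Y : Type u}
    {b : Y → Y → V} (hb : IsVCat b) (f g : X → Y) (t : F.obj X) :
    ⨅ x, b (f x) (g x) ≤ L.str b (F.map (↾f) t) (F.map (↾g) t) :=
  hL X Y (fnGraph id) b (isVCat_fnGraph_id X) hb f g (isVFunctor_fnGraph_id hb f)
    (isVFunctor_fnGraph_id hb g) t

end Lifting

namespace LaxExt

variable {V : Type u} [CompleteLattice V] [CommMonoid V] {F : Type u ⥤ Type u} (E : LaxExt V F)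

def IsEnriched : Prop :=
  ∀ (u : V) (X : Type u) (t : F.obj X), u ≤ E.ext (fun x y => ⨆ _ : x = y, u) t t

def Induces (L : Lifting V F) : Prop :=
  ∀ (X : Type u) (a : X → X → V), IsVCat a → ∀ t s : F.obj X, E.ext a t s = L.str a t s

theorem mul_le_ext_comp {X Y Z : Type u} (r : X → Y → V) (s : Y → Z → V) (t : F.obj X)
    (u : F.obj Y) (w : F.obj Z) :
    E.ext r t u * E.ext s u w ≤ E.ext (fun x z => ⨆ y, r x y * s y z) t w :=
  (le_iSup (fun u => E.ext r t u * E.ext s u w) u).trans (E.comp r s t w)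

variable [IsQuantale V]

theorem ext_map_map {X X' Y Y' : Type u} (r : Y → Y' → V) (f : X → Y) (g : X' → Y')
    (t : F.obj X) (s : F.obj X') :
    E.ext r (F.map (↾f) t) (F.map (↾g) s) = E.ext (fun x z => r (f x) (g z)) t s := by
  apply le_antisymm
  · calc E.ext r (F.map (↾f) t) (F.map (↾g) s)
        ≤ E.ext (fnGraph f) t (F.map (↾f) t) * E.ext r (F.map (↾f) t) (F.map (↾g) s) *
            E.ext (fun y z => fnGraph g z y) (F.map (↾g) s) s :=
          le_mul_mul_of_one_le (E.lax_map f t) (E.lax_map_op g s) _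
      _ ≤ E.ext (fun x z => ⨆ y', (⨆ y, fnGraph f x y * r y y') * fnGraph g z y') t s :=
          (mul_le_mul_left (E.mul_le_ext_comp _ _ _ _ _) _).trans (E.mul_le_ext_comp _ _ _ _ _)
      _ = E.ext (fun x z => r (f x) (g z)) t s := by
          simp only [iSup_fnGraph_mul, iSup_mul_fnGraph]
  · calc E.ext (fun x z => r (f x) (g z)) t s
        ≤ E.ext (fun y x => fnGraph f x y) (F.map (↾f) t) t *
            E.ext (fun x z => r (f x) (g z)) t s * E.ext (fnGraph g) s (F.map (↾g) s) :=
          le_mul_mul_of_one_le (E.lax_map_op f t) (E.lax_map g s) _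
      _ ≤ E.ext (fun y y' => ⨆ z, (⨆ x, fnGraph f x y * r (f x) (g z)) * fnGraph g z y')
            (F.map (↾f) t) (F.map (↾g) s) :=
          (mul_le_mul_left (E.mul_le_ext_comp _ _ _ _ _) _).trans (E.mul_le_ext_comp _ _ _ _ _)
      _ ≤ E.ext r (F.map (↾f) t) (F.map (↾g) s) :=
          E.mono _ _ (fun y y' => (iSup_mono fun z => mul_le_mul_left
            (iSup_fnGraph_mul_le f (fun y z => r y (g z)) y z) _).trans
              (iSup_mul_fnGraph_le r g y y')) _ _

variable {E} {L : Lifting V F}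

theorem Induces.preservesInitial (hEL : E.Induces L) : L.PreservesInitial := by
  intro X Y a b f ha hb hf t s
  rw [← hEL X a ha, ← hEL Y b hb, E.ext_map_map, ← funext₂ hf]

theorem Induces.isEnriched (hEL : E.Induces L) (hE : E.IsEnriched) : L.IsEnriched := by
  intro X Y a b _ hb f g _ _ t
  rw [← hEL Y b hb, E.ext_map_map]
  exact (hE _ X t).trans (E.mono _ _ (fun x z => iSup_le fun h => h ▸ iInf_le _ x) t t)

end LaxExt

namespace Lifting

variable {V : Type u} [CompleteLattice V] [CommMonoid V] {F : Type u ⥤ Type u} (L : Lifting V F)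

def collageExt {X Y : Type u} (r : X → Y → V) (t : F.obj X) (s : F.obj Y) : V :=
  L.str (collage V Y) (F.map (↾fun x => Sum.inl (r x)) t) (F.map (↾Sum.inr) s)

variable [IsQuantale V] {L}

theorem IsEnriched.collageExt_mono (hL : L.IsEnriched) {X Y : Type u} {r r' : X → Y → V}
    (h : ∀ x y, r x y ≤ r' x y) (t : F.obj X) (s : F.obj Y) :
    L.collageExt r t s ≤ L.collageExt r' t s :=
  calc L.collageExt r t s
      ≤ L.str (collage V Y) (F.map (↾fun x => Sum.inl (r' x)) t)
          (F.map (↾fun x => Sum.inl (r x)) t) * L.collageExt r t s :=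
        le_mul_of_one_le_left' <| (le_iInf fun x => one_le_powStr (h x)).trans
          (hL.iInf_le_str_map (isVCat_collage Y) (fun x => Sum.inl (r' x))
            (fun x => Sum.inl (r x)) t)
    _ ≤ L.collageExt r' t s := (L.isVCat _ (isVCat_collage Y)).2 _ _ _

theorem isVFunctor_collage_comp {Y Z : Type u} (s : Y → Z → V) :
    IsVFunctor (collage V Y) (collage V Z)
      (Sum.elim (fun p => Sum.inl fun z => ⨆ y, p y * s y z) (fun y => Sum.inl (s y))) := by
  rintro (p | y) (q | y')
  · exact powStr_le_powStr_comp s q p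
  · exact le_iInf fun z => le_qhom_iff.2 <|
      (mul_comm _ _).trans_le (le_iSup (fun y => p y * s y z) y')
  · exact bot_le
  · exact iSup_le fun h => h ▸ one_le_powStr fun _ => le_rfl

theorem mul_collageExt_le_collageExt_comp {X Y Z : Type u} (r : X → Y → V) (s : Y → Z → V)
    (t : F.obj X) (u : F.obj Y) (w : F.obj Z) :
    L.collageExt r t u * L.collageExt s u w ≤
      L.collageExt (fun x z => ⨆ y, r x y * s y z) t w := by
  refine (mul_le_mul_left ?_ _).trans ((L.isVCat _ (isVCat_collage Z)).2 _
    (F.map (↾fun y => Sum.inl (s y)) u) _)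
  have := L.map _ _ _ (isVCat_collage Y) (isVCat_collage Z) (isVFunctor_collage_comp s)
    (F.map (↾fun x => Sum.inl (r x)) t) (F.map (↾Sum.inr) u)
  rwa [map_ofHom_comp_apply, map_ofHom_comp_apply] at this

theorem IsEnriched.one_le_collageExt_fnGraph (hL : L.IsEnriched) {X Y : Type u} (f : X → Y)
    (t : F.obj X) : 1 ≤ L.collageExt (fnGraph f) t (F.map (↾f) t) := by
  rw [collageExt, map_ofHom_comp_apply]
  exact (le_iInf fun _ => le_iSup_of_le rfl le_rfl).trans (hL.iInf_le_str_map (isVCat_collage Y)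
    (fun x => Sum.inl (fnGraph f x)) (fun x => Sum.inr (f x)) t)

theorem IsEnriched.one_le_collageExt_fnGraph_symm (hL : L.IsEnriched) {X Y : Type u} (f : X → Y)
    (t : F.obj X) : 1 ≤ L.collageExt (fun y x => fnGraph f x y) (F.map (↾f) t) t := by
  rw [collageExt, map_ofHom_comp_apply]
  exact (le_iInf fun _ => le_iSup_of_le rfl le_rfl).trans (hL.iInf_le_str_map (isVCat_collage X)
    (fun x => Sum.inl fun x' => fnGraph f x' (f x)) Sum.inr t)

theorem IsEnriched.le_collageExt_diag (hL : L.IsEnriched) (u : V) {X : Type u} (t : F.obj X) :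
    u ≤ L.collageExt (fun x y => ⨆ _ : x = y, u) t t :=
  (le_iInf fun _ => le_iSup_of_le rfl le_rfl).trans (hL.iInf_le_str_map (isVCat_collage X)
    (fun x => Sum.inl fun y => ⨆ _ : x = y, u) Sum.inr t)

theorem collageExt_eq_str (hI : L.PreservesInitial) (hL : L.IsEnriched) {X : Type u}
    {a : X → X → V} (ha : IsVCat a) (t s : F.obj X) : L.collageExt a t s = L.str a t s := by
  apply le_antisymm
  · have key := hI.str_map_le (isVCat_collage X) ha (Sum.elim (fun x => Sum.inl (a x)) Sum.inr)
      (Sum.elim id id) ?_ (F.map (↾Sum.inl) t) (F.map (↾Sum.inr) s)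
    · simpa only [collageExt, map_ofHom_comp_apply, Sum.elim_inl, Sum.elim_inr, id_eq,
        map_ofHom_id_apply] using key
    · rintro (x | x) (x' | x')
      · exact (iInf_le _ x').trans (qhom_le_of_one_le (ha.1 x') _)
      · exact le_rfl
      · exact bot_le
      · exact iSup_le fun h => h ▸ ha.1 x
  · have hle :
        1 ≤ L.str (collage V X) (F.map (↾fun x => Sum.inl (a x)) s) (F.map (↾Sum.inr) s) :=
      (le_iInf ha.1).trans
        (hL.iInf_le_str_map (isVCat_collage X) (fun x => Sum.inl (a x)) Sum.inr s)
    have hyoneda := L.map a _ (fun x => Sum.inl (a x)) ha (isVCat_collage X)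
      (le_powStr_of_isVCat ha) t s
    exact (le_mul_of_one_le_right' hle).trans <|
      (mul_le_mul_left hyoneda _).trans ((L.isVCat _ (isVCat_collage X)).2 _ _ _)

variable (L) in
def collageLaxExt (hL : L.IsEnriched) : LaxExt V F where
  ext := L.collageExt
  mono _ _ h := hL.collageExt_mono h
  comp r s t w := iSup_le fun _ => mul_collageExt_le_collageExt_comp r s t _ w
  lax_map := hL.one_le_collageExt_fnGraph
  lax_map_op := hL.one_le_collageExt_fnGraph_symm

theorem IsEnriched.collageLaxExt_isEnriched (hL : L.IsEnriched) :
    (L.collageLaxExt hL).IsEnriched :=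
  fun u _ => hL.le_collageExt_diag u

theorem PreservesInitial.collageLaxExt_induces (hI : L.PreservesInitial) (hL : L.IsEnriched) :
    (L.collageLaxExt hL).Induces L :=
  fun _ _ ha => collageExt_eq_str hI hL ha

end Lifting

/-- a lifting is induced by a `V`-enriched lax extension iff it preserves
initial morphisms and is `V`-Cat-enriched. -/
theorem stmt_15 {V : Type u} [CompleteLattice V] [CommMonoid V] (hV : QuantaleLaw V)
    {F : Type u ⥤ Type u} (L : Lifting V F) :
    (∃ E : LaxExt V F,
      (∀ (u : V) (X : Type u) (t : F.obj X),
        u ≤ E.ext (fun x y => ⨆ _ : x = y, u) t t) ∧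
      (∀ (X : Type u) (a : X → X → V), IsVCat a →
        ∀ t s : F.obj X, E.ext a t s = L.str a t s)) ↔
    ((∀ {X Y : Type u} (a : X → X → V) (b : Y → Y → V) (f : X → Y),
        IsVCat a → IsVCat b → IsInitialVFunctor a b f →
        IsInitialVFunctor (L.str a) (L.str b) (F.map (TypeCat.ofHom f))) ∧
     (∀ (X Y : Type u) (a : X → X → V) (b : Y → Y → V), IsVCat a → IsVCat b →
        ∀ f g : X → Y, IsVFunctor a b f → IsVFunctor a b g →
        ∀ t : F.obj X, (⨅ x, b (f x) (g x)) ≤ L.str b (F.map (TypeCat.ofHom f) t) (F.map (TypeCat.ofHom g) t))) := by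
  have := hV.isQuantale
  show (∃ E : LaxExt V F, E.IsEnriched ∧ E.Induces L) ↔ L.PreservesInitial ∧ L.IsEnriched
  constructor
  · rintro ⟨E, hE, hEL⟩
    exact ⟨hEL.preservesInitial, hEL.isEnriched hE⟩
  · rintro ⟨hI, hL⟩
    exact ⟨L.collageLaxExt hL, hL.collageLaxExt_isEnriched, hI.collageLaxExt_induces hL⟩
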